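/- arXiv:2111.06918 — 5 statements merged into one kernel-verified Lean document; each statement's English description precedes it below -/
import Mathlib

section
/- Let r be a relation on V and let π : V → S map each vertex to its strongly connected component. Define the condensation relation r̄ on S by: (s, t) ∈ r̄ iff there exist vertices u, w with π(u) = s, π(w) = t, and (u, w) ∈ r. Then the transitive closure of r equals { (u, w) | (π(u), π(w)) ∈ TC(r̄) } restricted to pairs where, if π(u) = π(w), the SCC is nontrivial (i.e., contains a cycle in TC(r)). Equivalently, under the convention that each SCC vertex of the condensation carries a self-loop exactly when its SCC contains a pair (u,w) with (u,w) ∈ r and π(u)=π(w) equal, TC(r) = { (u,w) | (π(u), π(w)) ∈ TC(r̄) }. -/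
open Relation

variable {V : Type*} {S : Type*}

theorem stmt2 (r : V → V → Prop) (π : V → S) (rbar : S → S → Prop)
    (hπ : ∀ u w : V, π u = π w ↔ (u = w ∨ (Relation.TransGen r u w ∧ Relation.TransGen r w u)))
    (hbar : ∀ s t : S, rbar s t ↔ ∃ a b : V, π a = s ∧ π b = t ∧ r a b) :
    ∀ u w : V, Relation.TransGen r u w ↔ Relation.TransGen rbar (π u) (π w) := by
  have hrefl : ∀ x y : V, π x = π y → Relation.ReflTransGen r x y := by
    intro x y h
    rcases (hπ x y).1 h with rfl | ⟨h1, _⟩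
    · exact Relation.ReflTransGen.refl
    · exact h1.to_reflTransGen
  have hstep : ∀ (s t : S) (u w : V), rbar s t → π u = s → π w = t →
      Relation.TransGen r u w := by
    intro s t u w hst hu hw
    obtain ⟨a, b, ha, hb, hab⟩ := (hbar s t).1 hst
    exact Relation.TransGen.trans_right (hrefl u a (hu.trans ha.symm))
      (Relation.TransGen.head' hab (hrefl b w (hb.trans hw.symm)))
  intro u w
  constructor
  · intro h
    induction h with
    | single h => exact Relation.TransGen.single ((hbar _ _).2 ⟨u, _, rfl, rfl, h⟩)
    | tail _ h ih => exact ih.tail ((hbar _ _).2 ⟨_, _, rfl, rfl, h⟩)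
  · intro h
    have : ∀ (t : S) (w : V), Relation.TransGen rbar (π u) t → π w = t →
        Relation.TransGen r u w := by
      intro t w h
      induction h generalizing w with
      | single h1 => intro hw; exact hstep _ _ u w h1 rfl hw
      | tail hbt h1 ih =>
        intro hw
        obtain ⟨a, b, ha, hb, hab⟩ := (hbar _ _).1 h1
        exact Relation.TransGen.trans_left ((ih a ha).tail hab) (hrefl b w (hb.trans hw.symm))
    exact this (π w) w h rfl
end

section
/- Let r be a relation on V, π : V → S its SCC projection, and r̄ the condensation on S. Suppose (π(u), π(w)) ∈ TC(r̄). Then (u, w) ∈ TC(r). -/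
open Relation

variable {V : Type*} {S : Type*}

theorem stmt7 (r : V → V → Prop) (π : V → S) (rbar : S → S → Prop)
    (hπ : ∀ u w : V, π u = π w ↔ (u = w ∨ (Relation.TransGen r u w ∧ Relation.TransGen r w u)))
    (hbar : ∀ s t : S, rbar s t ↔ ∃ a b : V, π a = s ∧ π b = t ∧ r a b)
    (u w : V) (h : Relation.TransGen rbar (π u) (π w)) :
    Relation.TransGen r u w := by
  -- helper: same π means equal or mutually reachable; lift to a prefix/suffix step
  have glue : ∀ a b : V, π a = π b → ∀ c : V, Relation.TransGen r a c → Relation.TransGen r b c := by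
    intro a b hab c hac
    rcases (hπ a b).mp hab with rfl | ⟨_, hba⟩
    · exact hac
    · exact hba.trans hac
  have main : ∀ s t : S, Relation.TransGen rbar s t →
      ∀ u w : V, π u = s → π w = t → Relation.TransGen r u w := by
    intro s t h
    induction h with
    | single hst =>
      intro u w hu hw
      rcases (hbar _ _).mp hst with ⟨a, b, ha, hb, hab⟩
      have h1 : Relation.TransGen r u b := by
        have : Relation.TransGen r a b := Relation.TransGen.single hab
        exact glue a u (ha.trans hu.symm) b this
      rcases (hπ b w).mp (hb.trans hw.symm) with rfl | ⟨hbw, _⟩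
      · exact h1
      · exact h1.trans hbw
    | tail _ hst ih =>
      intro u w hu hw
      rcases (hbar _ _).mp hst with ⟨a, b, ha, hb, hab⟩
      have h1 : Relation.TransGen r u a := ih u a hu ha
      have h2 : Relation.TransGen r u b := h1.tail hab
      rcases (hπ b w).mp (hb.trans hw.symm) with rfl | ⟨hbw, _⟩
      · exact h2
      · exact h2.trans hbw
  exact main _ _ h u w rfl rfl
end

section
/- Let r be a relation on V, π : V → S the SCC projection, r̄ the condensation. For vertex sets given as relations: define Join₁ = { (x, s) | ∃ u, (x, u) ∈ P ∧ π(u) = s } for a relation P ⊆ V × V (the 'Prefix result'), and Join₂ = { (x, t) | ∃ s, (x, s) ∈ Join₁ ∧ (s, t) ∈ TC(r̄) }. Then { (x, w) | ∃ t, (x, t) ∈ Join₂ ∧ π(w) = t } = { (x, w) | ∃ u, (x, u) ∈ P ∧ (u, w) ∈ TC(r) } = P ∘ TC(r). -/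
open Relation

variable {V : Type*} {S : Type*}

theorem stmt13 (r : V → V → Prop) (π : V → S) (rbar : S → S → Prop)
    (hπ : ∀ u w : V, π u = π w ↔ (u = w ∨ (Relation.TransGen r u w ∧ Relation.TransGen r w u)))
    (hbar : ∀ s t : S, rbar s t ↔ ∃ a b : V, π a = s ∧ π b = t ∧ r a b)
    (P : V → V → Prop) (x w : V) :
    (∃ t : S, (∃ s : S, (∃ u : V, P x u ∧ π u = s) ∧ Relation.TransGen rbar s t) ∧
        π w = t) ↔
      ∃ u : V, P x u ∧ Relation.TransGen r u w := by
  have hrefl : ∀ a b : V, π a = π b → Relation.ReflTransGen r a b := by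
    intro a b hab
    rcases (hπ a b).1 hab with h | ⟨h, _⟩
    · exact h ▸ Relation.ReflTransGen.refl
    · exact h.to_reflTransGen
  have fwd : ∀ s t, Relation.TransGen rbar s t →
      ∀ u v : V, π u = s → π v = t → Relation.TransGen r u v := by
    intro s t h
    induction h with
    | single hst =>
      intro u v hu hv
      obtain ⟨a, b, ha, hb, hab⟩ := (hbar _ _).1 hst
      exact Relation.TransGen.trans_right (hrefl u a (hu.trans ha.symm))
        ((Relation.TransGen.single hab).trans_left (hrefl b v (hb.trans hv.symm)))
    | tail _ hst ih =>
      intro u v hu hv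
      obtain ⟨a, b, ha, hb, hab⟩ := (hbar _ _).1 hst
      exact ((ih u a hu ha).tail hab).trans_left (hrefl b v (hb.trans hv.symm))
  have bwd : ∀ u v : V, Relation.TransGen r u v → Relation.TransGen rbar (π u) (π v) := by
    intro u v h
    induction h with
    | single h => exact Relation.TransGen.single ((hbar _ _).2 ⟨_, _, rfl, rfl, h⟩)
    | tail _ h ih => exact ih.tail ((hbar _ _).2 ⟨_, _, rfl, rfl, h⟩)
  constructor
  · rintro ⟨t, ⟨s, ⟨u, hPu, hu⟩, hst⟩, hw⟩
    exact ⟨u, hPu, fwd s t hst u w hu hw⟩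
  · rintro ⟨u, hPu, huw⟩
    exact ⟨π w, ⟨π u, ⟨u, hPu, rfl⟩, bwd u w huw⟩, rfl⟩
end

section
/- Let r be a relation on V with SCC projection π and condensation r̄. Then (s, t) ∈ TC(r̄) if and only if there exist u, w ∈ V with π(u) = s, π(w) = t, and (u, w) ∈ TC(r). -/
open Relation

variable {V : Type*} {S : Type*}

theorem stmt14 (r : V → V → Prop) (π : V → S) (rbar : S → S → Prop)
    (hπ : ∀ u w : V, π u = π w ↔ (u = w ∨ (Relation.TransGen r u w ∧ Relation.TransGen r w u)))
    (hbar : ∀ s t : S, rbar s t ↔ ∃ a b : V, π a = s ∧ π b = t ∧ r a b)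
    (s t : S) (hs : ∃ a : V, π a = s) (ht : ∃ b : V, π b = t) :
    Relation.TransGen rbar s t ↔
      ∃ u w : V, π u = s ∧ π w = t ∧ Relation.TransGen r u w := by
  constructor
  · intro h
    induction h with
    | single h =>
      obtain ⟨a, b, ha, hb, hab⟩ := (hbar _ _).1 h
      exact ⟨a, b, ha, hb, TransGen.single hab⟩
    | tail _ h ih =>
      obtain ⟨a, b, ha, hb, hab⟩ := (hbar _ _).1 h
      obtain ⟨u, w, hu, hw, huw⟩ := ih ⟨a, ha⟩
      rcases (hπ w a).1 (hw.trans ha.symm) with rfl | ⟨hwa, _⟩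
      · exact ⟨u, b, hu, hb, huw.tail hab⟩
      · exact ⟨u, b, hu, hb, (huw.trans hwa).tail hab⟩
  · rintro ⟨u, w, rfl, rfl, huw⟩
    exact huw.lift π (fun a b hab => (hbar _ _).2 ⟨a, b, rfl, rfl, hab⟩)
end

section
/- Let r be a relation on V with SCC projection π and condensation r̄. For any vertex u, the set of vertices reachable from u via TC(r) equals the union, over SCC identifiers t with (π(u), t) ∈ TC(r̄), of the vertex sets π⁻¹(t). That is, { w | (u,w) ∈ TC(r) } = ⋃_{t : (π(u), t) ∈ TC(r̄)} π⁻¹(t). -/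
open Relation

variable {V : Type*} {S : Type*}

theorem stmt18 (r : V → V → Prop) (π : V → S) (rbar : S → S → Prop)
    (hπ : ∀ u w : V, π u = π w ↔ (u = w ∨ (Relation.TransGen r u w ∧ Relation.TransGen r w u)))
    (hbar : ∀ s t : S, rbar s t ↔ ∃ a b : V, π a = s ∧ π b = t ∧ r a b)
    (u : V) :
    {w : V | Relation.TransGen r u w} =
      ⋃ t ∈ {t : S | Relation.TransGen rbar (π u) t}, π ⁻¹' {t} := by
  have hrefl : ∀ x y : V, π x = π y → Relation.ReflTransGen r x y := by
    intro x y h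
    rcases (hπ x y).mp h with rfl | ⟨h1, _⟩
    · exact Relation.ReflTransGen.refl
    · exact h1.to_reflTransGen
  have key : ∀ t : S, Relation.TransGen rbar (π u) t →
      ∃ b : V, π b = t ∧ Relation.TransGen r u b := by
    intro t ht
    induction ht with
    | single h =>
      rcases (hbar _ _).mp h with ⟨a, b, ha, hb, hab⟩
      exact ⟨b, hb, Relation.TransGen.tail' (hrefl u a ha.symm) hab⟩
    | tail _ h ih =>
      rcases ih with ⟨c, hc, huc⟩
      rcases (hbar _ _).mp h with ⟨a, b, ha, hb, hab⟩
      exact ⟨b, hb, Relation.TransGen.tail'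
        (huc.to_reflTransGen.trans (hrefl c a (hc.trans ha.symm))) hab⟩
  ext w
  simp only [Set.mem_setOf_eq, Set.mem_iUnion, Set.mem_preimage, Set.mem_singleton_iff]
  constructor
  · intro h
    refine ⟨π w, ?_, rfl⟩
    induction h with
    | single h => exact TransGen.single ((hbar _ _).mpr ⟨u, _, rfl, rfl, h⟩)
    | tail _ h ih => exact ih.tail ((hbar _ _).mpr ⟨_, _, rfl, rfl, h⟩)
  · rintro ⟨t, ht, hw⟩
    rcases key t ht with ⟨b, hb, hub⟩
    exact Relation.TransGen.trans_left hub (hrefl b w (hb.trans hw.symm))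
end
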